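/- arXiv:math/9405212 — 2 statements merged into one kernel-verified Lean document; each statement's English description precedes it below -/
import Mathlib

section
/- The Laguerre polynomials are orthonormal with respect to the weight e^{−x} on [0, ∞): for all natural numbers m and n, ∫₀^∞ L_m(x) L_n(x) e^{−x} dx = δ_{mn}. -/
/-!
Integrating termwise with `∫₀^∞ xᵏ e⁻ˣ dx = k!` turns the moments `∫₀^∞ xʲ Lₙ(x) e⁻ˣ dx` into
`j!` times an alternating binomial sum, which is `(-1)ⁿ j! (j choose n)`; in particular `Lₙ` is
orthogonal to every `xʲ` with `j < n`. Expanding `Lₘ` then leaves a second alternating sum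
`∑ⱼ (-1)ʲ (m choose j) (j choose n) = (-1)ᵐ δₘₙ`. Both sums are `(-1)ᴺ Δᴺ f` for `f = (· choose j)`,
whose iterated forward differences are again binomial coefficients.
-/

open Nat

/-- The `n`-th Laguerre polynomial, `L_n(x) = ∑_{k=0}^{n} (−1)^k (n choose k) x^k / k!`. -/
noncomputable def laguerre (n : ℕ) (x : ℝ) : ℝ :=
  ∑ k ∈ Finset.range (n + 1), (-1 : ℝ) ^ k * (n.choose k : ℝ) * x ^ k / (k ! : ℝ)

open Finset MeasureTheory Real

section FwdDiff

variable {G : Type*} [AddCommGroup G]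

theorem sum_range_neg_one_pow_mul_choose_smul_eq_fwdDiff_iter (f : ℕ → G) (n y : ℕ) :
    ∑ k ∈ range (n + 1), ((-1 : ℤ) ^ k * n.choose k) • f (y + k) =
      (-1 : ℤ) ^ n • (fwdDiff 1)^[n] f y := by
  rw [fwdDiff_iter_eq_sum_shift, smul_sum]
  refine sum_congr rfl fun k hk => ?_
  have hkn : k ≤ n := Nat.lt_succ_iff.mp (mem_range.mp hk)
  have hsign : (-1 : ℤ) ^ k = (-1) ^ n * (-1) ^ (n - k) := by
    rw [← pow_add, show n + (n - k) = k + 2 * (n - k) by omega, pow_add, pow_mul]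
    simp
  rw [smul_smul, hsign, smul_eq_mul, mul_assoc, mul_one]

end FwdDiff

theorem fwdDiff_iter_choose_apply_self (n j : ℕ) :
    (fwdDiff 1)^[n] (fun x : ℕ => (x.choose j : ℤ)) j = j.choose n := by
  rcases le_or_gt n j with hnj | hjn
  · obtain ⟨d, rfl⟩ := Nat.exists_eq_add_of_le hnj
    rw [fwdDiff_iter_choose d n, Nat.choose_symm_add]
  · obtain ⟨d, rfl⟩ := Nat.exists_eq_add_of_lt hjn
    have hconst : (fwdDiff 1)^[j] (fun x : ℕ => (x.choose j : ℤ)) = fun _ => 1 := by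
      simpa using fwdDiff_iter_choose 0 j
    rw [Nat.choose_eq_zero_of_lt hjn, show j + d + 1 = (d + 1) + j by omega,
      Function.iterate_add_apply, hconst, Function.iterate_succ_apply, fwdDiff_const]
    simp [fwdDiff_iter_eq_sum_shift]

theorem sum_range_neg_one_pow_mul_choose_mul_add_choose (n j : ℕ) :
    ∑ k ∈ range (n + 1), (-1 : ℤ) ^ k * n.choose k * (j + k).choose j =
      (-1) ^ n * j.choose n := by
  have := sum_range_neg_one_pow_mul_choose_smul_eq_fwdDiff_iter (fun x => (x.choose j : ℤ)) n j
  rw [fwdDiff_iter_choose_apply_self] at this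
  simpa using this

theorem sum_range_neg_one_pow_mul_choose_mul_choose (m n : ℕ) :
    ∑ j ∈ range (m + 1), (-1 : ℤ) ^ j * m.choose j * j.choose n =
      if m = n then (-1) ^ m else 0 := by
  simpa [fwdDiff_iter_choose_zero] using
    sum_range_neg_one_pow_mul_choose_smul_eq_fwdDiff_iter (fun x => (x.choose n : ℤ)) m 0

theorem integrableOn_pow_mul_exp_neg_Ioi (k : ℕ) :
    IntegrableOn (fun x : ℝ => x ^ k * exp (-x)) (Set.Ioi 0) := by
  refine (GammaIntegral_convergent (s := k + 1) (by positivity)).congr_fun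
    (fun x _ => ?_) measurableSet_Ioi
  simp [← Real.rpow_natCast, mul_comm]

theorem integral_pow_mul_exp_neg_Ioi (k : ℕ) :
    ∫ x in Set.Ioi (0 : ℝ), x ^ k * exp (-x) = k ! := by
  rw [← Real.Gamma_nat_eq_factorial, Gamma_eq_integral (by positivity)]
  refine setIntegral_congr_fun measurableSet_Ioi fun x _ => ?_
  simp [← Real.rpow_natCast, mul_comm]

section SumPowMulExpNeg

variable {ι : Type*} (s : Finset ι) (c : ι → ℝ) (d : ι → ℕ)

theorem integrableOn_sum_mul_pow_mul_exp_neg_Ioi :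
    IntegrableOn (fun x : ℝ => (∑ i ∈ s, c i * x ^ d i) * exp (-x)) (Set.Ioi 0) := by
  simp_rw [sum_mul, mul_assoc]
  exact integrable_finsetSum s fun i _ => (integrableOn_pow_mul_exp_neg_Ioi (d i)).const_mul _

theorem integral_sum_mul_pow_mul_exp_neg_Ioi :
    ∫ x in Set.Ioi (0 : ℝ), (∑ i ∈ s, c i * x ^ d i) * exp (-x) = ∑ i ∈ s, c i * (d i)! := by
  simp_rw [sum_mul, mul_assoc]
  rw [integral_finsetSum s fun i _ => (integrableOn_pow_mul_exp_neg_Ioi (d i)).const_mul _]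
  simp_rw [integral_const_mul, integral_pow_mul_exp_neg_Ioi]

end SumPowMulExpNeg

theorem pow_mul_laguerre (j n : ℕ) (x : ℝ) :
    x ^ j * laguerre n x =
      ∑ k ∈ range (n + 1), (-1 : ℝ) ^ k * n.choose k / k ! * x ^ (j + k) := by
  rw [laguerre, mul_sum]
  refine sum_congr rfl fun k _ => ?_
  ring

theorem integrableOn_pow_mul_laguerre_mul_exp_neg_Ioi (j n : ℕ) :
    IntegrableOn (fun x => x ^ j * laguerre n x * exp (-x)) (Set.Ioi 0) := by
  simp_rw [pow_mul_laguerre]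
  exact integrableOn_sum_mul_pow_mul_exp_neg_Ioi _ _ _

theorem integral_pow_mul_laguerre_mul_exp_neg_Ioi (j n : ℕ) :
    ∫ x in Set.Ioi (0 : ℝ), x ^ j * laguerre n x * exp (-x) = (-1) ^ n * j ! * j.choose n := by
  simp_rw [pow_mul_laguerre]
  rw [integral_sum_mul_pow_mul_exp_neg_Ioi]
  have hterm : ∀ k : ℕ, (-1 : ℝ) ^ k * n.choose k / k ! * (j + k)! =
      j ! * ((-1) ^ k * n.choose k * (j + k).choose j) := by
    intro k
    rw [← Nat.add_choose_mul_factorial_mul_factorial j k, Nat.choose_symm_add]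
    push_cast
    field_simp
  simp_rw [hterm, ← mul_sum]
  rw [mul_comm ((-1 : ℝ) ^ n), mul_assoc]
  congr 1
  exact_mod_cast sum_range_neg_one_pow_mul_choose_mul_add_choose n j

/-- The Laguerre polynomials are orthonormal with respect to the weight `e^{−x}` on `[0, ∞)`:
`∫₀^∞ L_m(x) L_n(x) e^{−x} dx = δ_{mn}`. -/
theorem laguerre_orthonormal (m n : ℕ) :
    ∫ x in Set.Ioi (0 : ℝ), laguerre m x * laguerre n x * Real.exp (-x) =
      if m = n then 1 else 0 := by
  have hexpand : ∀ x, laguerre m x * laguerre n x * exp (-x) = ∑ j ∈ range (m + 1),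
      (-1 : ℝ) ^ j * m.choose j / j ! * (x ^ j * laguerre n x * exp (-x)) := by
    intro x
    rw [laguerre, sum_mul, sum_mul]
    exact sum_congr rfl fun j _ => by ring
  have hcancel : ∑ j ∈ range (m + 1), (-1 : ℝ) ^ j * m.choose j / j ! *
      ((-1) ^ n * j ! * j.choose n) =
        (-1) ^ n * ∑ j ∈ range (m + 1), (-1 : ℝ) ^ j * m.choose j * j.choose n := by
    rw [mul_sum]
    exact sum_congr rfl fun j _ => by field_simp
  simp_rw [hexpand]
  rw [integral_finsetSum _ fun j _ =>
      (integrableOn_pow_mul_laguerre_mul_exp_neg_Ioi j n).const_mul _]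
  simp_rw [integral_const_mul, integral_pow_mul_laguerre_mul_exp_neg_Ioi, hcancel]
  have hdelta : ∑ j ∈ range (m + 1), (-1 : ℝ) ^ j * m.choose j * j.choose n =
      if m = n then (-1) ^ m else 0 := by
    exact_mod_cast sum_range_neg_one_pow_mul_choose_mul_choose m n
  rw [hdelta]
  split_ifs with hmn
  · rw [hmn, ← pow_add, ← two_mul, pow_mul, neg_one_sq, one_pow]
  · rw [mul_zero]
end

section
/- For all natural numbers n₁, n₂, n₃, the signed Laguerre linearization coefficient E(n₁, n₂, n₃) = (−1)^{n₁+n₂+n₃} ∫₀^∞ L_{n₁}(x) L_{n₂}(x) L_{n₃}(x) e^{−x} dx is a nonnegative integer. -/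
/-!
With `Δ` the forward difference, `(-1)^n L_n(x) = Δⁿ[k ↦ x^k / k!](0)`, and
`∫₀^∞ x^(i+j+k) e^(-x) dx / (i! j! k!)` is the trinomial coefficient `T(i,j,k)`. Hence the signed
coefficient is the mixed difference `Δ₁^a Δ₂^b Δ₃^c T` at the origin. In terms of the shifts
`Eᵢ = 1 + Δᵢ`, Pascal's rule `E₁E₂E₃ T = (E₂E₃ + E₁E₃ + E₁E₂) T` reads
`Δ₁Δ₂Δ₃ T = (2 + Δ₁ + Δ₂ + Δ₃) T`, and on the faces where one index vanishes it reads
`Δ₁Δ₂ T = T` (up to the symmetry of `T`). These relations give a recursion for the mixed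
differences with nonnegative integer coefficients.
-/

open Nat

open Finset Function MeasureTheory Set Real fwdDiff fwdDiff_aux

section FwdDiff

variable {M : Type*} [AddCommMonoid M] (h : M)

lemma fwdDiff_iter_sub_apply {G : Type*} [AddCommGroup G] (f g : M → G) (n : ℕ) (y : M) :
    (Δ_[h])^[n] (fun x ↦ f x - g x) y = (Δ_[h])^[n] f y - (Δ_[h])^[n] g y := by
  have := congrFun (map_sub (fwdDiffₗ M G h ^ n) f g) y
  rw [coe_fwdDiffₗ_pow] at this
  exact this

variable {R : Type*} [CommRing R]

lemma fwdDiff_iter_const_mul_apply (r : R) (f : M → R) (n : ℕ) (y : M) :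
    (Δ_[h])^[n] (fun x ↦ r * f x) y = r * (Δ_[h])^[n] f y :=
  congrFun (fwdDiff_iter_const_smul h r f n) y

lemma fwdDiff_iter_mul_const_apply (r : R) (f : M → R) (n : ℕ) (y : M) :
    (Δ_[h])^[n] (fun x ↦ f x * r) y = (Δ_[h])^[n] f y * r := by
  simpa only [mul_comm _ r] using fwdDiff_iter_const_mul_apply h r f n y

end FwdDiff

section MixedFwdDiff

variable {G : Type*} [AddCommGroup G]

noncomputable def mixedFwdDiff (a b c : ℕ) (u : ℕ → ℕ → ℕ → G) : G :=
  (Δ_[1])^[a] (fun i ↦ (Δ_[1])^[b] (fun j ↦ (Δ_[1])^[c] (u i j) 0) 0) 0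

lemma mixedFwdDiff_succ_left (a b c : ℕ) (u : ℕ → ℕ → ℕ → G) :
    mixedFwdDiff (a + 1) b c u = mixedFwdDiff a b c (fun i j k ↦ u (i + 1) j k - u i j k) := by
  rw [mixedFwdDiff, mixedFwdDiff, iterate_succ_apply]
  refine congrArg (fun f ↦ (Δ_[1])^[a] f 0) (funext fun i ↦ ?_)
  simp only [fwdDiff, fwdDiff_iter_sub_apply]

lemma mixedFwdDiff_succ_mid (a b c : ℕ) (u : ℕ → ℕ → ℕ → G) :
    mixedFwdDiff a (b + 1) c u = mixedFwdDiff a b c (fun i j k ↦ u i (j + 1) k - u i j k) := by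
  rw [mixedFwdDiff, mixedFwdDiff]
  refine congrArg (fun f ↦ (Δ_[1])^[a] f 0) (funext fun i ↦ ?_)
  rw [iterate_succ_apply]
  refine congrArg (fun f ↦ (Δ_[1])^[b] f 0) (funext fun j ↦ ?_)
  simp only [fwdDiff, fwdDiff_iter_sub_apply]

lemma mixedFwdDiff_succ_right (a b c : ℕ) (u : ℕ → ℕ → ℕ → G) :
    mixedFwdDiff a b (c + 1) u = mixedFwdDiff a b c (fun i j k ↦ u i j (k + 1) - u i j k) := by
  simp only [mixedFwdDiff, iterate_succ_apply]
  rfl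

lemma mixedFwdDiff_eq_sum (a b c : ℕ) (u : ℕ → ℕ → ℕ → G) :
    mixedFwdDiff a b c u = ∑ i ∈ range (a + 1), ∑ j ∈ range (b + 1), ∑ k ∈ range (c + 1),
      ((-1 : ℤ) ^ (a - i) * a.choose i * ((-1) ^ (b - j) * b.choose j) *
        ((-1) ^ (c - k) * c.choose k)) • u i j k := by
  simp only [mixedFwdDiff, fwdDiff_iter_eq_sum_shift, smul_sum, mul_smul, zero_add, smul_eq_mul,
    mul_one]

lemma mixedFwdDiff_congr {a b c : ℕ} {u v : ℕ → ℕ → ℕ → G}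
    (h : ∀ i ≤ a, ∀ j ≤ b, ∀ k ≤ c, u i j k = v i j k) :
    mixedFwdDiff a b c u = mixedFwdDiff a b c v := by
  simp only [mixedFwdDiff_eq_sum]
  refine sum_congr rfl fun i hi ↦ sum_congr rfl fun j hj ↦ sum_congr rfl fun k hk ↦ ?_
  rw [h i (mem_range_succ_iff.1 hi) j (mem_range_succ_iff.1 hj) k (mem_range_succ_iff.1 hk)]

lemma mixedFwdDiff_zero (a b c : ℕ) : mixedFwdDiff a b c (fun _ _ _ ↦ (0 : G)) = 0 := by
  simp [mixedFwdDiff_eq_sum]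

lemma mixedFwdDiff_add (a b c : ℕ) (u v : ℕ → ℕ → ℕ → G) :
    mixedFwdDiff a b c (fun i j k ↦ u i j k + v i j k) =
      mixedFwdDiff a b c u + mixedFwdDiff a b c v := by
  simp only [mixedFwdDiff_eq_sum, smul_add, sum_add_distrib]

lemma mixedFwdDiff_smul {R : Type*} [Monoid R] [DistribMulAction R G] (a b c : ℕ) (r : R)
    (u : ℕ → ℕ → ℕ → G) :
    mixedFwdDiff a b c (fun i j k ↦ r • u i j k) = r • mixedFwdDiff a b c u := by
  simp only [mixedFwdDiff_eq_sum, smul_sum, smul_comm r]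

lemma mixedFwdDiff_comm_left (a b c : ℕ) (u : ℕ → ℕ → ℕ → G) :
    mixedFwdDiff a b c u = mixedFwdDiff b a c (fun j i k ↦ u i j k) := by
  rw [mixedFwdDiff_eq_sum, mixedFwdDiff_eq_sum, sum_comm]
  simp only [mul_comm ((-1 : ℤ) ^ (a - _) * _)]

lemma mixedFwdDiff_comm_right (a b c : ℕ) (u : ℕ → ℕ → ℕ → G) :
    mixedFwdDiff a b c u = mixedFwdDiff a c b (fun i k j ↦ u i j k) := by
  rw [mixedFwdDiff_eq_sum, mixedFwdDiff_eq_sum]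
  refine sum_congr rfl fun i _ ↦ ?_
  rw [sum_comm]
  simp only [mul_right_comm _ ((-1 : ℤ) ^ (b - _) * _)]

end MixedFwdDiff

lemma mixedFwdDiff_mul {R : Type*} [CommRing R] (a b c : ℕ) (f g h : ℕ → R) :
    mixedFwdDiff a b c (fun i j k ↦ f i * g j * h k) =
      (Δ_[1])^[a] f 0 * (Δ_[1])^[b] g 0 * (Δ_[1])^[c] h 0 := by
  simp only [mixedFwdDiff, fwdDiff_iter_const_mul_apply, fwdDiff_iter_mul_const_apply]

lemma integral_mixedFwdDiff {α E : Type*} [MeasurableSpace α] [NormedAddCommGroup E]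
    [NormedSpace ℝ E] {μ : Measure α} (a b c : ℕ) (u : α → ℕ → ℕ → ℕ → E)
    (hu : ∀ i j k, Integrable (fun x ↦ u x i j k) μ) :
    ∫ x, mixedFwdDiff a b c (u x) ∂μ = mixedFwdDiff a b c (fun i j k ↦ ∫ x, u x i j k ∂μ) := by
  simp only [mixedFwdDiff_eq_sum, ← Int.cast_smul_eq_zsmul ℝ]
  have hu' (i j k : ℕ) (r : ℝ) : Integrable (fun x ↦ r • u x i j k) μ := (hu i j k).smul r
  rw [integral_finsetSum _ fun i _ ↦
    integrable_finsetSum _ fun j _ ↦ integrable_finsetSum _ fun k _ ↦ hu' i j k _]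
  refine sum_congr rfl fun i _ ↦ ?_
  rw [integral_finsetSum _ fun j _ ↦ integrable_finsetSum _ fun k _ ↦ hu' i j k _]
  refine sum_congr rfl fun j _ ↦ ?_
  rw [integral_finsetSum _ fun k _ ↦ hu' i j k _]
  simp only [integral_smul]

noncomputable def trinomial (i j k : ℕ) : ℝ := (i + j + k)! / (i ! * j ! * k !)

lemma trinomial_comm_left (i j k : ℕ) : trinomial j i k = trinomial i j k := by
  rw [trinomial, trinomial, add_comm j, mul_comm (j ! : ℝ)]

lemma trinomial_comm_right (i j k : ℕ) : trinomial i k j = trinomial i j k := by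
  rw [trinomial, trinomial, add_right_comm, mul_right_comm]

lemma trinomial_zero_zero (i : ℕ) : trinomial i 0 0 = 1 := by
  simp [trinomial, Nat.factorial_ne_zero]

lemma trinomial_succ_succ_zero (i j : ℕ) :
    trinomial (i + 1) (j + 1) 0 = trinomial i (j + 1) 0 + trinomial (i + 1) j 0 := by
  simp only [trinomial, Nat.add_succ, Nat.succ_add, Nat.factorial_succ, add_zero]
  field_simp
  push_cast
  ring

lemma trinomial_succ_succ_succ (i j k : ℕ) :
    trinomial (i + 1) (j + 1) (k + 1) =
      trinomial i (j + 1) (k + 1) + trinomial (i + 1) j (k + 1) + trinomial (i + 1) (j + 1) k := by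
  simp only [trinomial, Nat.add_succ, Nat.succ_add, Nat.factorial_succ]
  field_simp
  push_cast
  ring

lemma mixedFwdDiff_trinomial_comm_left (a b c : ℕ) :
    mixedFwdDiff a b c trinomial = mixedFwdDiff b a c trinomial := by
  simp only [mixedFwdDiff_comm_left a, trinomial_comm_left]

lemma mixedFwdDiff_trinomial_comm_right (a b c : ℕ) :
    mixedFwdDiff a b c trinomial = mixedFwdDiff a c b trinomial := by
  simp only [mixedFwdDiff_comm_right a b, trinomial_comm_right]

lemma mixedFwdDiff_trinomial_succ_zero_zero (a : ℕ) :
    mixedFwdDiff (a + 1) 0 0 trinomial = 0 := by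
  rw [mixedFwdDiff_succ_left, ← mixedFwdDiff_zero a 0 0]
  refine mixedFwdDiff_congr fun i _ j hj k hk ↦ ?_
  rw [Nat.le_zero.1 hj, Nat.le_zero.1 hk, trinomial_zero_zero, trinomial_zero_zero, sub_self]

lemma mixedFwdDiff_trinomial_succ_succ_zero (a b : ℕ) :
    mixedFwdDiff (a + 1) (b + 1) 0 trinomial = mixedFwdDiff a b 0 trinomial := by
  rw [mixedFwdDiff_succ_left, mixedFwdDiff_succ_mid]
  refine mixedFwdDiff_congr fun i _ j _ k hk ↦ ?_
  rw [Nat.le_zero.1 hk, trinomial_succ_succ_zero]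
  ring

lemma mixedFwdDiff_trinomial_succ_succ_succ (a b c : ℕ) :
    mixedFwdDiff (a + 1) (b + 1) (c + 1) trinomial =
      mixedFwdDiff (a + 1) b c trinomial + mixedFwdDiff a (b + 1) c trinomial +
        mixedFwdDiff a b (c + 1) trinomial + 2 * mixedFwdDiff a b c trinomial := by
  rw [mixedFwdDiff_succ_left a b c, mixedFwdDiff_succ_mid a b c, mixedFwdDiff_succ_right a b c,
    mixedFwdDiff_succ_left, mixedFwdDiff_succ_mid, mixedFwdDiff_succ_right, ← smul_eq_mul,
    ← mixedFwdDiff_smul, ← mixedFwdDiff_add, ← mixedFwdDiff_add, ← mixedFwdDiff_add]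
  refine mixedFwdDiff_congr fun i _ j _ k _ ↦ ?_
  rw [smul_eq_mul, trinomial_succ_succ_succ]
  ring

/-- The coefficient of `x^a y^b z^c` in `1 / (1 - (x y + y z + z x) - 2 x y z)`. -/
def linearizationCoeff : ℕ → ℕ → ℕ → ℕ
  | 0, 0, 0 => 1
  | _ + 1, 0, 0 => 0
  | 0, _ + 1, 0 => 0
  | 0, 0, _ + 1 => 0
  | a + 1, b + 1, 0 => linearizationCoeff a b 0
  | a + 1, 0, c + 1 => linearizationCoeff a 0 c
  | 0, b + 1, c + 1 => linearizationCoeff 0 b c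
  | a + 1, b + 1, c + 1 => linearizationCoeff (a + 1) b c + linearizationCoeff a (b + 1) c +
      linearizationCoeff a b (c + 1) + 2 * linearizationCoeff a b c

lemma mixedFwdDiff_trinomial (a b c : ℕ) :
    mixedFwdDiff a b c trinomial = linearizationCoeff a b c := by
  induction a, b, c using linearizationCoeff.induct with
  | case1 => simp [mixedFwdDiff, trinomial, linearizationCoeff]
  | case2 a =>
    rw [mixedFwdDiff_trinomial_succ_zero_zero, linearizationCoeff, Nat.cast_zero]
  | case3 b =>
    rw [mixedFwdDiff_trinomial_comm_left, mixedFwdDiff_trinomial_succ_zero_zero,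
      linearizationCoeff, Nat.cast_zero]
  | case4 c =>
    rw [mixedFwdDiff_trinomial_comm_right, mixedFwdDiff_trinomial_comm_left,
      mixedFwdDiff_trinomial_succ_zero_zero, linearizationCoeff, Nat.cast_zero]
  | case5 a b ih => rw [mixedFwdDiff_trinomial_succ_succ_zero, ih, linearizationCoeff]
  | case6 a c ih =>
    rw [mixedFwdDiff_trinomial_comm_right, mixedFwdDiff_trinomial_succ_succ_zero,
      mixedFwdDiff_trinomial_comm_right, ih, linearizationCoeff]
  | case7 b c ih =>
    rw [mixedFwdDiff_trinomial_comm_left, mixedFwdDiff_trinomial_comm_right,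
      mixedFwdDiff_trinomial_succ_succ_zero, mixedFwdDiff_trinomial_comm_right,
      mixedFwdDiff_trinomial_comm_left, ih, linearizationCoeff]
  | case8 a b c ih₁ ih₂ ih₃ ih₄ =>
    rw [mixedFwdDiff_trinomial_succ_succ_succ, ih₁, ih₂, ih₃, ih₄, linearizationCoeff]
    push_cast
    ring

lemma neg_one_pow_mul_laguerre (n : ℕ) (x : ℝ) :
    (-1) ^ n * laguerre n x = (Δ_[1])^[n] (fun k ↦ x ^ k / k !) 0 := by
  rw [fwdDiff_iter_eq_sum_shift, laguerre, mul_sum]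
  refine sum_congr rfl fun k hk ↦ ?_
  obtain ⟨m, rfl⟩ := Nat.exists_eq_add_of_le (mem_range_succ_iff.1 hk)
  have hsq : ((-1 : ℝ) ^ k) ^ 2 = 1 := by simp [← pow_mul]
  simp only [zero_add, smul_eq_mul, mul_one, zsmul_eq_mul, Nat.add_sub_cancel_left]
  push_cast
  linear_combination (-1) ^ m * (k + m).choose k * x ^ k / k ! * hsq

lemma integrableOn_exp_neg_mul_pow (n : ℕ) :
    IntegrableOn (fun x : ℝ ↦ exp (-x) * x ^ n) (Ioi 0) := by
  simpa [← Real.rpow_natCast] using Real.GammaIntegral_convergent (s := n + 1) (by positivity)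

lemma integral_exp_neg_mul_pow (n : ℕ) : ∫ x in Ioi (0 : ℝ), exp (-x) * x ^ n = n ! := by
  simpa [← Real.rpow_natCast, Real.Gamma_nat_eq_factorial] using
    (Real.Gamma_eq_integral (s := n + 1) (by positivity)).symm

lemma exp_neg_mul_pow_div_factorial (x : ℝ) (i j k : ℕ) :
    exp (-x) * (x ^ i / i ! * (x ^ j / j !) * (x ^ k / k !)) =
      (i ! * j ! * k ! : ℝ)⁻¹ * (exp (-x) * x ^ (i + j + k)) := by
  rw [pow_add, pow_add]
  field_simp

lemma integrableOn_exp_neg_mul_pow_div_factorial (i j k : ℕ) :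
    IntegrableOn (fun x : ℝ ↦ exp (-x) * (x ^ i / i ! * (x ^ j / j !) * (x ^ k / k !)))
      (Ioi 0) := by
  simp only [exp_neg_mul_pow_div_factorial]
  exact (integrableOn_exp_neg_mul_pow _).const_mul _

lemma integral_exp_neg_mul_pow_div_factorial (i j k : ℕ) :
    ∫ x in Ioi (0 : ℝ), exp (-x) * (x ^ i / i ! * (x ^ j / j !) * (x ^ k / k !)) =
      trinomial i j k := by
  rw [setIntegral_congr_fun measurableSet_Ioi fun x _ ↦ exp_neg_mul_pow_div_factorial x i j k,
    integral_const_mul, integral_exp_neg_mul_pow, trinomial, inv_mul_eq_div]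

lemma neg_one_pow_mul_integral_laguerre (a b c : ℕ) :
    (-1) ^ (a + b + c) *
        ∫ x in Ioi (0 : ℝ), laguerre a x * laguerre b x * laguerre c x * exp (-x) =
      mixedFwdDiff a b c trinomial := by
  calc _ = ∫ x in Ioi (0 : ℝ), mixedFwdDiff a b c
          (fun i j k ↦ exp (-x) * (x ^ i / i ! * (x ^ j / j !) * (x ^ k / k !))) := by
        rw [← integral_const_mul]
        refine setIntegral_congr_fun measurableSet_Ioi fun x _ ↦ ?_
        rw [show (-1) ^ (a + b + c) * (laguerre a x * laguerre b x * laguerre c x * exp (-x)) =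
            exp (-x) * ((-1) ^ a * laguerre a x * ((-1) ^ b * laguerre b x) *
              ((-1) ^ c * laguerre c x)) by ring,
          neg_one_pow_mul_laguerre, neg_one_pow_mul_laguerre, neg_one_pow_mul_laguerre,
          ← mixedFwdDiff_mul]
        exact (mixedFwdDiff_smul a b c (exp (-x)) _).symm
    _ = mixedFwdDiff a b c trinomial := by
        rw [integral_mixedFwdDiff _ _ _ _ integrableOn_exp_neg_mul_pow_div_factorial]
        simp only [integral_exp_neg_mul_pow_div_factorial]

/-- The signed Laguerre linearization coefficient
`E(n₁, n₂, n₃) = (−1)^{n₁+n₂+n₃} ∫₀^∞ L_{n₁}(x) L_{n₂}(x) L_{n₃}(x) e^{−x} dx`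
is a nonnegative integer. -/
theorem laguerre_linearization_coeff_nat (n₁ n₂ n₃ : ℕ) :
    ∃ m : ℕ,
      (-1 : ℝ) ^ (n₁ + n₂ + n₃) *
          (∫ x in Set.Ioi (0 : ℝ),
            laguerre n₁ x * laguerre n₂ x * laguerre n₃ x * Real.exp (-x)) = (m : ℝ) :=
  ⟨linearizationCoeff n₁ n₂ n₃, by
    rw [neg_one_pow_mul_integral_laguerre, mixedFwdDiff_trinomial]⟩
end
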